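/- Let A = ℤ ⊕ (ℤ³ / ⟨2(λ_1 − λ_2)⟩) where λ_1, λ_2, μ denote the standard generators of ℤ³, and let G be the subgroup of A generated by (l', 2μ) and (0, 2λ_1), where l' generates the first ℤ summand. Then A/G ≅ ℤ ⊕ ℤ/2ℤ ⊕ ℤ/2ℤ. -/

import Mathlib

/-! The homomorphism `ℤ × ℤ³ → ℤ × ℤ/2 × ℤ/2`, `(n, v) ↦ (v₂ - 2n, v₀ mod 2, v₁ mod 2)`, is
surjective, kills the relator `2(λ₁ - λ₂)` and both generators of `G`, and conversely every
element of its kernel is `n (l', 2μ) + (a + b) (0, 2λ₁)` modulo the relator. -/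

open QuotientAddGroup

namespace GluedManifold

-- `λ₁, λ₂, μ` are the basis vectors `Pi.single 0 1`, `Pi.single 1 1`, `Pi.single 2 1`.
abbrev relationsC : AddSubgroup (Fin 3 → ℤ) :=
  AddSubgroup.closure {(2 : ℤ) • (Pi.single (0 : Fin 3) (1 : ℤ) - Pi.single 1 1)}

abbrev H1C := (Fin 3 → ℤ) ⧸ relationsC

abbrev boundaryImage : AddSubgroup (ℤ × H1C) :=
  AddSubgroup.closure
    {((1 : ℤ), (mk ((2 : ℤ) • Pi.single (2 : Fin 3) (1 : ℤ)) : H1C)),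
     ((0 : ℤ), (mk ((2 : ℤ) • Pi.single (0 : Fin 3) (1 : ℤ)) : H1C))}

def coordHom : (Fin 3 → ℤ) →+ ℤ × ZMod 2 × ZMod 2 :=
  (Pi.evalAddMonoidHom _ 2).prod
    (((Int.castAddHom _).comp (Pi.evalAddMonoidHom _ 0)).prod
      ((Int.castAddHom _).comp (Pi.evalAddMonoidHom _ 1)))

@[simp]
lemma coordHom_apply (v : Fin 3 → ℤ) :
    coordHom v = (v 2, (v 0 : ZMod 2), (v 1 : ZMod 2)) :=
  rfl

lemma relationsC_le_ker_coordHom : relationsC ≤ coordHom.ker := by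
  rw [AddSubgroup.closure_le, Set.singleton_subset_iff, SetLike.mem_coe, AddMonoidHom.mem_ker]
  decide

def h1Hom : ℤ × H1C →+ ℤ × ZMod 2 × ZMod 2 :=
  (zmultiplesHom _ ((-2 : ℤ), (0 : ZMod 2), (0 : ZMod 2))).coprod
    (lift _ coordHom relationsC_le_ker_coordHom)

@[simp]
lemma h1Hom_mk (n : ℤ) (v : Fin 3 → ℤ) :
    h1Hom (n, mk v) = (v 2 - 2 * n, (v 0 : ZMod 2), (v 1 : ZMod 2)) := by
  simp [h1Hom, Prod.ext_iff]
  ring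

lemma h1Hom_surjective : Function.Surjective h1Hom := by
  rintro ⟨m, a, b⟩
  obtain ⟨a, rfl⟩ := ZMod.intCast_surjective a
  obtain ⟨b, rfl⟩ := ZMod.intCast_surjective b
  exact ⟨(0, mk ![a, b, m]), by simp⟩

lemma mk_mem_boundaryImage {n a b : ℤ} {v : Fin 3 → ℤ}
    (h2 : v 2 = 2 * n) (h0 : v 0 = 2 * a) (h1 : v 1 = 2 * b) :
    ((n, mk v) : ℤ × H1C) ∈ boundaryImage := by
  have hv : v = n • (2 : ℤ) • Pi.single 2 1 + (a + b) • (2 : ℤ) • Pi.single 0 1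
      - b • (2 : ℤ) • (Pi.single (0 : Fin 3) (1 : ℤ) - Pi.single 1 1) := by
    funext i
    fin_cases i <;> simp [*] <;> ring
  have hrel : (mk ((2 : ℤ) • (Pi.single (0 : Fin 3) (1 : ℤ) - Pi.single 1 1)) : H1C) = 0 :=
    (eq_zero_iff _).2 (AddSubgroup.subset_closure rfl)
  have hcomb : ((n, mk v) : ℤ × H1C) =
      n • ((1 : ℤ), (mk ((2 : ℤ) • Pi.single (2 : Fin 3) (1 : ℤ)) : H1C))
        + (a + b) • ((0 : ℤ), (mk ((2 : ℤ) • Pi.single (0 : Fin 3) (1 : ℤ)) : H1C)) := by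
    rw [hv]
    simp only [mk_add, mk_sub, mk_zsmul, hrel, Prod.ext_iff]
    simp
  rw [hcomb]
  exact add_mem (zsmul_mem (AddSubgroup.subset_closure (by simp)) n)
    (zsmul_mem (AddSubgroup.subset_closure (by simp)) (a + b))

lemma ker_h1Hom : h1Hom.ker = boundaryImage := by
  apply le_antisymm
  · rintro ⟨n, x⟩ hx
    obtain ⟨v, rfl⟩ := mk_surjective x
    simp only [AddMonoidHom.mem_ker, h1Hom_mk, Prod.mk_eq_zero,
      ZMod.intCast_zmod_eq_zero_iff_dvd] at hx
    obtain ⟨h2, ⟨a, h0⟩, ⟨b, h1⟩⟩ := hx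
    exact mk_mem_boundaryImage (by omega) h0 h1
  · rw [AddSubgroup.closure_le]
    rintro x (rfl | rfl) <;> simp [show (2 : ZMod 2) = 0 from rfl]

end GluedManifold

open GluedManifold in
/-- Mayer–Vietoris computation: let `A = ℤ ⊕ (ℤ³/⟨2(λ₁-λ₂)⟩)` (with `λ₁, λ₂, μ`
the standard generators of `ℤ³`) and let `G ≤ A` be generated by `(l', 2μ)` and
`(0, 2λ₁)`, where `l'` generates the `ℤ` summand.  Then
`A/G ≅ ℤ ⊕ ℤ/2ℤ ⊕ ℤ/2ℤ`. -/
theorem h1_of_glued_manifold :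
    ∀ (K : AddSubgroup (Fin 3 → ℤ)),
      K = AddSubgroup.closure
            {(2 : ℤ) • (Pi.single (0 : Fin 3) (1 : ℤ) - Pi.single 1 1)} →
    ∀ (G : AddSubgroup (ℤ × ((Fin 3 → ℤ) ⧸ K))),
      G = AddSubgroup.closure
            {((1 : ℤ), QuotientAddGroup.mk ((2 : ℤ) • Pi.single (2 : Fin 3) (1 : ℤ))),
             ((0 : ℤ), QuotientAddGroup.mk ((2 : ℤ) • Pi.single (0 : Fin 3) (1 : ℤ)))} →
    Nonempty ((ℤ × ((Fin 3 → ℤ) ⧸ K)) ⧸ G ≃+ ℤ × ZMod 2 × ZMod 2) := by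
  rintro K rfl G rfl
  exact ⟨(quotientAddEquivOfEq ker_h1Hom.symm).trans
    (quotientKerEquivOfSurjective h1Hom h1Hom_surjective)⟩
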